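/- Let G be a vertex-minimal planar graph without 4-cycles and 6-cycles having no (F2, F)-partition. Then every vertex of degree 3 in G has a neighbor of degree at least 5. -/

import Mathlib

open SimpleGraph

/-- `G` contains no cycle of length `n`. -/
def NoCycleLen {V : Type} (G : SimpleGraph V) (n : ℕ) : Prop :=
  ∀ (v : V) (w : G.Walk v v), w.IsCycle → w.length ≠ n

/-- `(V1, V2)` partitions the vertex subset `s`, with `G[V1]` a forest of maximum
degree at most 2 and `G[V2]` a forest. -/
def IsF2FPartOn {V : Type} (G : SimpleGraph V) (s V1 V2 : Set V) : Prop :=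
  V1 ∪ V2 = s ∧ Disjoint V1 V2 ∧
  (G.induce V1).IsAcyclic ∧
  (∀ x : V1, ((G.induce V1).neighborSet x).ncard ≤ 2) ∧
  (G.induce V2).IsAcyclic

/-- A combinatorial plane embedding of `G`: a finite set of faces, each with a closed
boundary walk, satisfying the handshaking identity for faces and Euler's formula. -/
structure PlaneEmbedding {V : Type} [Fintype V] [DecidableEq V]
    (G : SimpleGraph V) [DecidableRel G.Adj] : Type 1 where
  Face : Type
  faceFintype : Fintype Face
  boundary : Face → List V
  boundary_ne : ∀ f, boundary f ≠ []
  boundary_walk : ∀ f, (boundary f ++ (boundary f).take 1).Chain' G.Adj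
  edge_count : ∑ f ∈ (@Finset.univ Face faceFintype), (boundary f).length
      = 2 * G.edgeFinset.card
  euler : (Fintype.card V : ℤ) - G.edgeFinset.card + (@Fintype.card Face faceFintype) = 2

/-- `G` is planar: it admits a plane embedding. -/
def SimpleGraph.Planar {V : Type} [Fintype V] [DecidableEq V]
    (G : SimpleGraph V) [DecidableRel G.Adj] : Prop :=
  Nonempty (PlaneEmbedding G)

/-!
Remove a degree-3 vertex `v` all of whose neighbours have degree at most 4, and take an
(F₂, F)-partition `(W₁, W₂)` of `G - v`. If `v` has at most one neighbour in `W₂`, it joins the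
forest `W₂`. Otherwise it has at most one neighbour `u` in `W₁`, and it joins `W₁` unless `u`
already has two neighbours there. In that case `u` has at most one neighbour in `W₂` (its degree
is at most 4 and `v` is a neighbour), so `u` moves to `W₂` and `v` joins `W₁` as an isolated
vertex.
-/

namespace SimpleGraph

variable {V : Type*} {G : SimpleGraph V}

lemma IsAcyclic.induce_mono {s t : Set V} (h : (G.induce s).IsAcyclic) (hts : t ⊆ s) :
    (G.induce t).IsAcyclic :=
  h.embedding (G.induceHomOfLE hts)

lemma isAcyclic_induce_insert {s : Set V} {v : V} (hs : (G.induce s).IsAcyclic)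
    (hv : (G.neighborSet v ∩ s).Subsingleton) : (G.induce (insert v s)).IsAcyclic := by
  classical
  intro u c hc
  let c' := c.map (Embedding.induce _).toHom
  have hc' : c'.IsCycle := hc.map Subtype.val_injective
  have hsupp : ∀ x ∈ c'.support, x ∈ insert v s := by
    simp only [c', Walk.support_map, List.mem_map]
    rintro _ ⟨y, -, rfl⟩
    exact y.2
  by_cases hvc : v ∈ c'.support
  · -- the two cycle-neighbours of `v` would be two distinct neighbours of `v` in `s`
    set r := c'.rotate v hvc
    have hr : r.IsCycle := hc'.rotate hvc
    have hrs : ∀ x ∈ r.support, G.Adj v x → x ∈ G.neighborSet v ∩ s := fun x hx hvx =>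
      ⟨hvx, (hsupp x ((c'.mem_support_rotate_iff v hvc).1 hx)).resolve_left hvx.ne'⟩
    exact hr.snd_ne_penultimate (hv (hrs _ (r.getVert_mem_support 1) (r.adj_snd hr.not_nil))
      (hrs _ (r.getVert_mem_support _) (r.adj_penultimate hr.not_nil).symm))
  · have hsupp' : ∀ x ∈ c'.support, x ∈ s := fun x hx =>
      (hsupp x hx).resolve_left (fun h => hvc (h ▸ hx))
    refine hs (c'.induce s hsupp') ?_
    rw [← Walk.isCycle_map_iff_of_injective (f := (Embedding.induce s).toHom)
      Subtype.val_injective, Walk.map_induce]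
    exact hc'

lemma ncard_neighborSet_induce (s : Set V) (x : s) :
    ((G.induce s).neighborSet x).ncard = (G.neighborSet x ∩ s).ncard := by
  rw [← Set.ncard_image_of_injective _ Subtype.val_injective, Set.inter_comm,
    ← Subtype.image_preimage_coe]
  rfl

noncomputable def induceInduceIso (s : Set V) (t : Set s) :
    (G.induce s).induce t ≃g G.induce (Subtype.val '' t) where
  toEquiv := Equiv.Set.image Subtype.val t Subtype.val_injective
  map_rel_iff' := Iff.rfl

lemma ncard_neighborSet_eq_degree [Fintype V] [DecidableRel G.Adj] (v : V) :
    (G.neighborSet v).ncard = G.degree v := by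
  rw [← card_neighborSet_eq_degree, Set.ncard_eq_toFinset_card', Set.toFinset_card]

end SimpleGraph

section F2FPartition

variable {V : Type} {G : SimpleGraph V} {s W₁ W₂ : Set V} {u v : V}

lemma isF2FPartOn_iff : IsF2FPartOn G s W₁ W₂ ↔ W₁ ∪ W₂ = s ∧ Disjoint W₁ W₂ ∧
    (G.induce W₁).IsAcyclic ∧ (∀ x ∈ W₁, (G.neighborSet x ∩ W₁).ncard ≤ 2) ∧
    (G.induce W₂).IsAcyclic := by
  simp only [IsF2FPartOn, ncard_neighborSet_induce, Subtype.forall]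

lemma IsF2FPartOn.of_induce {V₁ V₂ : Set s} (h : IsF2FPartOn (G.induce s) Set.univ V₁ V₂) :
    IsF2FPartOn G s (Subtype.val '' V₁) (Subtype.val '' V₂) := by
  obtain ⟨hu, hd, ha₁, hn₁, ha₂⟩ := isF2FPartOn_iff.1 h
  refine isF2FPartOn_iff.2 ⟨?_, hd.image Subtype.val_injective.injOn (Set.subset_univ _)
    (Set.subset_univ _), (induceInduceIso s V₁).isAcyclic_iff.1 ha₁, ?_,
    (induceInduceIso s V₂).isAcyclic_iff.1 ha₂⟩
  · rw [← Set.image_union, hu, Set.image_univ, Subtype.range_coe]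
  · rintro _ ⟨x, hx, rfl⟩
    rw [Set.inter_comm, ← Set.image_inter_preimage,
      Set.ncard_image_of_injective _ Subtype.val_injective, Set.inter_comm]
    exact hn₁ x hx

variable [Finite V]

lemma IsF2FPartOn.insert_left (h : IsF2FPartOn G s W₁ W₂) (hv : v ∉ s)
    (hv₁ : (G.neighborSet v ∩ W₁).ncard ≤ 1)
    (hnbr : ∀ u ∈ G.neighborSet v ∩ W₁, (G.neighborSet u ∩ W₁).ncard ≤ 1) :
    IsF2FPartOn G (insert v s) (insert v W₁) W₂ := by
  obtain ⟨hu, hd, ha₁, hn₁, ha₂⟩ := isF2FPartOn_iff.1 h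
  refine isF2FPartOn_iff.2 ⟨by rw [Set.insert_union, hu],
    Set.disjoint_insert_left.2 ⟨fun hv₂ => hv (hu ▸ Or.inr hv₂), hd⟩,
    isAcyclic_induce_insert ha₁ (Set.ncard_le_one_iff_subsingleton.1 hv₁), ?_, ha₂⟩
  rintro x (rfl | hx)
  · rw [Set.inter_insert_of_notMem (s := G.neighborSet x) (G.irrefl (v := x))]
    omega
  by_cases hxv : G.Adj x v
  · rw [Set.inter_insert_of_mem (s := G.neighborSet x) hxv]
    have := hnbr x ⟨hxv.symm, hx⟩
    have := Set.ncard_insert_le v (G.neighborSet x ∩ W₁)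
    omega
  · rw [Set.inter_insert_of_notMem (s := G.neighborSet x) hxv]
    exact hn₁ x hx

lemma IsF2FPartOn.insert_right (h : IsF2FPartOn G s W₁ W₂) (hv : v ∉ s)
    (hv₂ : (G.neighborSet v ∩ W₂).ncard ≤ 1) :
    IsF2FPartOn G (insert v s) W₁ (insert v W₂) := by
  obtain ⟨hu, hd, ha₁, hn₁, ha₂⟩ := isF2FPartOn_iff.1 h
  exact isF2FPartOn_iff.2 ⟨by rw [Set.union_insert, hu],
    Set.disjoint_insert_right.2 ⟨fun hv₁ => hv (hu ▸ Or.inl hv₁), hd⟩, ha₁, hn₁,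
    isAcyclic_induce_insert ha₂ (Set.ncard_le_one_iff_subsingleton.1 hv₂)⟩

lemma IsF2FPartOn.move_left_to_right (h : IsF2FPartOn G s W₁ W₂) (hu₁ : u ∈ W₁)
    (hu₂ : (G.neighborSet u ∩ W₂).ncard ≤ 1) :
    IsF2FPartOn G s (W₁ \ {u}) (insert u W₂) := by
  obtain ⟨hu, hd, ha₁, hn₁, ha₂⟩ := isF2FPartOn_iff.1 h
  refine isF2FPartOn_iff.2 ⟨?_, ?_, ha₁.induce_mono Set.sdiff_subset, fun x hx => ?_,
    isAcyclic_induce_insert ha₂ (Set.ncard_le_one_iff_subsingleton.1 hu₂)⟩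
  · rw [Set.union_insert, ← Set.insert_union, Set.insert_sdiff_singleton,
      Set.insert_eq_of_mem hu₁, hu]
  · exact Set.disjoint_insert_right.2 ⟨fun h => h.2 rfl, hd.mono_left Set.sdiff_subset⟩
  · exact (Set.ncard_le_ncard (Set.inter_subset_inter_right _ Set.sdiff_subset)).trans
      (hn₁ x hx.1)

lemma IsF2FPartOn.ncard_inter_add_ncard_inter (h : IsF2FPartOn G s W₁ W₂) (t : Set V) :
    (t ∩ W₁).ncard + (t ∩ W₂).ncard = (t ∩ s).ncard := by
  obtain ⟨hu, hd, -⟩ := h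
  rw [← hu, Set.inter_union_distrib_left,
    Set.ncard_union_eq (hd.mono Set.inter_subset_right Set.inter_subset_right)]

lemma IsF2FPartOn.exists_insert (h : IsF2FPartOn G s W₁ W₂) (hv : v ∉ s)
    (hv₃ : (G.neighborSet v ∩ s).ncard ≤ 3)
    (hnbr : ∀ u ∈ G.neighborSet v ∩ s, (G.neighborSet u ∩ s).ncard ≤ 3) :
    ∃ W₁' W₂', IsF2FPartOn G (insert v s) W₁' W₂' := by
  have hsplit := h.ncard_inter_add_ncard_inter (G.neighborSet v)
  by_cases hv₂ : (G.neighborSet v ∩ W₂).ncard ≤ 1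
  · exact ⟨_, _, h.insert_right hv hv₂⟩
  have hv₁ : (G.neighborSet v ∩ W₁).ncard ≤ 1 := by omega
  by_cases hlow : ∀ u ∈ G.neighborSet v ∩ W₁, (G.neighborSet u ∩ W₁).ncard ≤ 1
  · exact ⟨_, _, h.insert_left hv hv₁ hlow⟩
  push Not at hlow
  obtain ⟨u, hu, hu₁⟩ := hlow
  have hu₂ : (G.neighborSet u ∩ W₂).ncard ≤ 1 := by
    have := h.ncard_inter_add_ncard_inter (G.neighborSet u)
    have := hnbr u ⟨hu.1, h.1 ▸ Or.inl hu.2⟩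
    omega
  have hv₁' : G.neighborSet v ∩ (W₁ \ {u}) = ∅ := by
    rw [← Set.inter_sdiff_assoc, (Set.ncard_le_one_iff_subsingleton.1 hv₁).eq_singleton_of_mem hu,
      sdiff_self, Set.bot_eq_empty]
  exact ⟨_, _, (h.move_left_to_right hu.2 hu₂).insert_left hv (by simp [hv₁']) (by simp [hv₁'])⟩

end F2FPartition

theorem minimal_counterexample_3vertex_has_5plus_neighbor_general {V : Type} [Fintype V]
    (G : SimpleGraph V) [DecidableRel G.Adj]
    (hno : ¬ ∃ V1 V2 : Set V, IsF2FPartOn G Set.univ V1 V2)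
    (hmin : ∀ s : Set V, s ≠ Set.univ →
      ∃ V1 V2 : Set ↥s, IsF2FPartOn (G.induce s) Set.univ V1 V2) :
    ∀ v : V, G.degree v = 3 → ∃ u, G.Adj v u ∧ 5 ≤ G.degree u := by
  intro v hv
  by_contra! hsmall
  obtain ⟨V₁, V₂, hpart⟩ := hmin {v}ᶜ fun h => (h ▸ Set.mem_univ v : v ∈ ({v}ᶜ : Set V)) rfl
  have hv₃ : (G.neighborSet v ∩ {v}ᶜ).ncard ≤ 3 := by
    rw [← hv, ← ncard_neighborSet_eq_degree]
    exact Set.ncard_le_ncard Set.inter_subset_left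
  have hnbr : ∀ u ∈ G.neighborSet v ∩ {v}ᶜ, (G.neighborSet u ∩ {v}ᶜ).ncard ≤ 3 := by
    rintro u ⟨hvu, -⟩
    rw [← Set.sdiff_eq, Set.ncard_sdiff_singleton_of_mem (s := G.neighborSet u) hvu.symm,
      ncard_neighborSet_eq_degree]
    have := hsmall u hvu
    omega
  obtain ⟨W₁, W₂, hW⟩ := hpart.of_induce.exists_insert (fun h => h rfl) hv₃ hnbr
  rw [Set.insert_eq, Set.union_compl_self] at hW
  exact hno ⟨W₁, W₂, hW⟩

theorem minimal_counterexample_3vertex_has_5plus_neighbor {V : Type} [Fintype V]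
    [DecidableEq V] (G : SimpleGraph V) [DecidableRel G.Adj]
    (hplanar : G.Planar) (h4 : NoCycleLen G 4) (h6 : NoCycleLen G 6)
    (hno : ¬ ∃ V1 V2 : Set V, IsF2FPartOn G Set.univ V1 V2)
    (hmin : ∀ s : Set V, s ≠ Set.univ →
      ∃ V1 V2 : Set ↥s, IsF2FPartOn (G.induce s) Set.univ V1 V2) :
    ∀ v : V, G.degree v = 3 → ∃ u, G.Adj v u ∧ 5 ≤ G.degree u :=
  minimal_counterexample_3vertex_has_5plus_neighbor_general G hno hmin
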